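/- Given the location ℓ_a ∈ L of superpower a's club good, the choice profile c^{I*(ℓ_a)} obtained from the club-formation sequence is in the stage-one core. -/
import Mathlib


open Finset

/-- Union of a list of finsets. -/
def listUnion {ι : Type*} [DecidableEq ι] (s : List (Finset ι)) : Finset ι :=
  s.foldr (· ∪ ·) ∅

/-- A stage-one club-formation sequence `I₁, …, I_m` for superpower `a`'s club good, given
the benefit `ben i = g_{ia} (1 - d(i, ℓ_a))` each small country `i` derives from the club
good and the cost functions `ρ i`: the terms are pairwise disjoint, every member of `I_k`
gets a nonnegative payoff once `I₁ ∪ ⋯ ∪ I_k` has joined, and no further nonempty group of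
outside countries could jointly join with everyone getting a nonnegative payoff. -/
def IsClubFormationSeq {ι : Type*} [Fintype ι] [DecidableEq ι]
    (ben : ι → ℝ) (ρ : ι → Finset ι → ℝ) (s : List (Finset ι)) : Prop :=
  s.Pairwise Disjoint ∧
  (∀ k : Fin s.length, ∀ i ∈ s.get k, 0 ≤ ben i - ρ i (listUnion (s.take (k.val + 1)))) ∧
  ¬ ∃ J : Finset ι, J.Nonempty ∧ J ⊆ Finset.univ \ listUnion s ∧
      ∀ i ∈ J, 0 ≤ ben i - ρ i (listUnion s ∪ J)

/-- Stage-one utility of small country `i` under the choice profile `c : ι → Bool`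
(`true` = "join a's club", `false` = "join no club"): members pay the cost share for the
realized club `δ_a(c)`, non-members get `0`. -/
noncomputable def utility1 {ι : Type*} [Fintype ι] [DecidableEq ι]
    (ben : ι → ℝ) (ρ : ι → Finset ι → ℝ) (c : ι → Bool) (i : ι) : ℝ :=
  if c i then ben i - ρ i (Finset.univ.filter fun j => c j = true) else 0

/-- A stage-one choice profile is in the core if no nonempty coalition `T` can change its
own choices so that every member of `T` is strictly better off. -/
def InCore1 {ι : Type*} [Fintype ι] [DecidableEq ι]
    (ben : ι → ℝ) (ρ : ι → Finset ι → ℝ) (c : ι → Bool) : Prop :=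
  ¬ ∃ (T : Finset ι) (c' : ι → Bool), T.Nonempty ∧ (∀ i, i ∉ T → c' i = c i) ∧
      ∀ i ∈ T, utility1 ben ρ c i < utility1 ben ρ c' i

lemma mem_listUnion {ι : Type*} [DecidableEq ι] {s : List (Finset ι)} {i : ι} :
    i ∈ listUnion s ↔ ∃ t ∈ s, i ∈ t := by
  induction s with
  | nil => simp [listUnion]
  | cons hd tl ih =>
      rw [show listUnion (hd::tl) = hd ∪ listUnion tl from rfl, Finset.mem_union, ih]
      simp [List.mem_cons, or_and_right, exists_or]

lemma listUnion_take_subset {ι : Type*} [DecidableEq ι] (s : List (Finset ι)) (n : ℕ) :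
    listUnion (s.take n) ⊆ listUnion s := by
  intro i hi
  rw [mem_listUnion] at hi ⊢
  obtain ⟨t, ht, hit⟩ := hi
  exact ⟨t, List.take_subset n s ht, hit⟩

lemma rho_antitone {ι : Type*} (ρ : ι → Finset ι → ℝ)
    (hρdec : ∀ i (E E' : Finset ι), E ⊂ E' → ρ i E' < ρ i E)
    (i : ι) {E E' : Finset ι} (h : E ⊆ E') : ρ i E' ≤ ρ i E := by
  rcases eq_or_lt_of_le (α := Finset ι) h with rfl | hlt
  · exact le_refl _
  · exact le_of_lt (hρdec i E E' hlt)

/-- **The club-formation outcome is in the core** (Proposition 2).  Given the location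
`ℓ_a` of superpower `a`'s club good, the choice profile `c^{I*(ℓ_a)}` in which exactly the
countries in the union `I*(ℓ_a)` of a club-formation sequence join `a`'s club is in the
stage-one core. -/
theorem clubFormation_inCore
    {ι L : Type*} [Fintype ι] [DecidableEq ι] [MetricSpace L] [Fintype L]
    (loc : ι → L) (ℓa : L) (g : ι → ℝ) (ρ : ι → Finset ι → ℝ)
    (hg : ∀ i, 0 ≤ g i)
    (hd : ∀ i, dist (loc i) ℓa ≤ 1)
    (hρpos : ∀ i (E : Finset ι), 0 < ρ i E)
    (hρdec : ∀ i (E E' : Finset ι), E ⊂ E' → ρ i E' < ρ i E)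
    (s : List (Finset ι))
    (hs : IsClubFormationSeq (fun i => g i * (1 - dist (loc i) ℓa)) ρ s) :
    InCore1 (fun i => g i * (1 - dist (loc i) ℓa)) ρ
      (fun i => decide (i ∈ listUnion s)) := by
  set ben : ι → ℝ := fun i => g i * (1 - dist (loc i) ℓa) with hben
  set U : Finset ι := listUnion s with hU
  obtain ⟨hpw, hstep, hmax⟩ := hs
  rintro ⟨T, c', hT, hfix, himp⟩
  -- the current club is U
  have hfiltU : (Finset.univ.filter fun j => (decide (j ∈ U) : Bool) = true) = U := by
    ext j; simp
  -- every member of U has nonnegative current utility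
  have hmemU : ∀ i ∈ U, 0 ≤ ben i - ρ i U := by
    intro i hi
    rw [hU, mem_listUnion] at hi
    obtain ⟨t, ht, hit⟩ := hi
    obtain ⟨k, rfl⟩ := List.mem_iff_get.mp ht
    have h1 := hstep k i hit
    have h2 : ρ i U ≤ ρ i (listUnion (s.take (k.val + 1))) :=
      rho_antitone ρ hρdec i (listUnion_take_subset s _)
    linarith
  -- current utilities are nonnegative
  have hnonneg : ∀ i, 0 ≤ utility1 ben ρ (fun i => decide (i ∈ U)) i := by
    intro i
    unfold utility1
    by_cases hi : i ∈ U
    · simp only [utility1, hi, decide_true, if_true, hfiltU]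
      exact hmemU i hi
    · simp [hi]
  -- all coalition members choose true under the deviation
  have hTtrue : ∀ i ∈ T, c' i = true := by
    intro i hi
    by_contra hfalse
    have : c' i = false := by simpa using hfalse
    have h1 := himp i hi
    have h2 : utility1 ben ρ c' i = 0 := by simp [utility1, this]
    have := hnonneg i
    linarith
  -- the deviated club is U ∪ T
  have hδ' : (Finset.univ.filter fun j => c' j = true) = U ∪ T := by
    ext j
    by_cases hj : j ∈ T
    · simp [hTtrue j hj, hj]
    · simp [hfix j hj, hj]
  by_cases hsub : T ⊆ U
  · -- club unchanged, contradiction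
    obtain ⟨i, hi⟩ := hT
    have hiU : i ∈ U := hsub hi
    have hUT : U ∪ T = U := Finset.union_eq_left.mpr hsub
    have h1 := himp i hi
    have e1 : utility1 ben ρ (fun i => decide (i ∈ U)) i = ben i - ρ i U := by
      simp [utility1, hiU, hfiltU]
    have e2 : utility1 ben ρ c' i = ben i - ρ i U := by
      simp [utility1, hTtrue i hi, hδ', hUT]
    rw [e1, e2] at h1
    exact lt_irrefl _ h1
  · -- J = T \ U contradicts maximality
    apply hmax
    refine ⟨T \ U, ?_, ?_, ?_⟩
    · rw [Finset.sdiff_nonempty]; exact hsub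
    · intro j hj
      rw [Finset.mem_sdiff] at hj ⊢
      exact ⟨Finset.mem_univ j, hj.2⟩
    · intro i hi
      rw [Finset.mem_sdiff] at hi
      have h1 := himp i hi.1
      have e1 : utility1 ben ρ (fun i => decide (i ∈ U)) i = 0 := by
        simp [utility1, hi.2]
      have hUJ : U ∪ (T \ U) = U ∪ T := Finset.union_sdiff_self_eq_union
      have e2 : utility1 ben ρ c' i = ben i - ρ i (U ∪ (T \ U)) := by
        simp [utility1, hTtrue i hi.1, hδ', hUJ]
      rw [e1, e2] at h1
      exact le_of_lt h1
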